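/- arXiv:2509.10183 — 4 statements merged into one kernel-verified Lean document; each statement's English description precedes it below -/
import Mathlib

section
/- Let q be a prime power, n a positive integer, and let z₁, z₂ ∈ (F_q)^n with z₁ ≠ 0. Then the number of symmetric n×n matrices H over F_q satisfying H·z₁ = z₂ equals q^(n(n+1)/2) / q^n; equivalently, if H is chosen uniformly at random among symmetric matrices in F_q^{n×n}, then Pr[H·z₁ = z₂] = q^{-n}. -/
/-!
`H ↦ H z₁` is an additive homomorphism from the group of symmetric matrices onto `F ^ n`: it is
onto because, for `v` with `v ⬝ z₁ = 1`, the symmetric matrix `w vᵀ + v wᵀ - (w ⬝ z₁) v vᵀ`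
sends `z₁` to `w`. Hence all fibres, being cosets of the kernel, have the same size, namely
`q ^ (n(n+1)/2) / q ^ n`: symmetric matrices are the functions on unordered pairs of indices.
-/

namespace Matrix

variable {ι α : Type*}

def symmetricAddSubgroup (ι α : Type*) [AddGroup α] : AddSubgroup (Matrix ι ι α) where
  carrier := {H | H.IsSymm}
  add_mem' := IsSymm.add
  zero_mem' := isSymm_zero
  neg_mem' := IsSymm.neg

def symmetricAddSubgroupEquivSym2 [AddGroup α] : symmetricAddSubgroup ι α ≃ (Sym2 ι → α) :=
  (Equiv.subtypeEquivRight fun _ => IsSymm.ext_iff.trans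
    ⟨fun h i j => (h i j).symm, fun h i j => (h i j).symm⟩).trans Sym2.lift

theorem natCard_symmetricAddSubgroup [AddGroup α] [Fintype ι] :
    Nat.card (symmetricAddSubgroup ι α) =
      Nat.card α ^ (Fintype.card ι * (Fintype.card ι + 1) / 2) := by
  rw [Nat.card_congr symmetricAddSubgroupEquivSym2, Nat.card_fun,
    Nat.card_eq_fintype_card (α := Sym2 ι), Sym2.card, Nat.choose_two_right, Nat.add_sub_cancel,
    mul_comm]

theorem exists_isSymm_mulVec_eq {K : Type*} [Field K] [Fintype ι] [DecidableEq ι] {z : ι → K}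
    (hz : z ≠ 0) (w : ι → K) : ∃ H : Matrix ι ι K, H.IsSymm ∧ H *ᵥ z = w := by
  obtain ⟨i, hi⟩ := Function.ne_iff.mp hz
  set v : ι → K := Pi.single i (z i)⁻¹
  have hv : v ⬝ᵥ z = 1 := by simp [v, single_dotProduct, inv_mul_cancel₀ hi]
  refine ⟨vecMulVec w v + vecMulVec v w - (w ⬝ᵥ z) • vecMulVec v v, ?_, ?_⟩
  · simp [IsSymm, transpose_vecMulVec, add_comm]
  · simp [add_mulVec, sub_mulVec, smul_mulVec, vecMulVec_mulVec, hv, dotProduct_comm w z]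

end Matrix

theorem AddMonoidHom.natCard_fiber_mul_natCard {G M : Type*} [AddGroup G] [AddGroup M] [Finite G]
    (f : G →+ M) (hf : Function.Surjective f) (y : M) :
    Nat.card {g // f g = y} * Nat.card M = Nat.card G := by
  obtain ⟨g₀, rfl⟩ := hf y
  have fiber_equiv_ker : {g // f g = f g₀} ≃ f.ker :=
    (Equiv.subRight g₀).subtypeEquiv fun g => by simp [sub_eq_zero]
  rw [Nat.card_congr fiber_equiv_ker,
    ← Nat.card_congr (QuotientAddGroup.quotientKerEquivOfSurjective f hf).toEquiv, mul_comm,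
    ← AddSubgroup.card_eq_card_quotient_mul_card_addSubgroup]

theorem stmt0_general (q n : ℕ) (F : Type) [Field F] [Fintype F]
    (hq : Fintype.card F = q)
    (z₁ z₂ : Fin n → F) (hz₁ : z₁ ≠ 0) :
    Nat.card {H : Matrix (Fin n) (Fin n) F // H.IsSymm ∧ H.mulVec z₁ = z₂} =
      q ^ (n * (n + 1) / 2) / q ^ n := by
  let f :=
    (Matrix.mulVec.addMonoidHomLeft z₁).comp (Matrix.symmetricAddSubgroup (Fin n) F).subtype
  have hf : Function.Surjective f := fun w => by
    obtain ⟨H, hH, rfl⟩ := Matrix.exists_isSymm_mulVec_eq hz₁ w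
    exact ⟨⟨H, hH⟩, rfl⟩
  have fiber_equiv : {g // f g = z₂} ≃
      {H : Matrix (Fin n) (Fin n) F // H.IsSymm ∧ H.mulVec z₁ = z₂} :=
    Equiv.subtypeSubtypeEquivSubtypeInter Matrix.IsSymm (Matrix.mulVec · z₁ = z₂)
  have fiber_mul := f.natCard_fiber_mul_natCard hf z₂
  rw [Nat.card_congr fiber_equiv, Matrix.natCard_symmetricAddSubgroup, Nat.card_fun,
    Nat.card_eq_fintype_card (α := F), hq, Nat.card_fin, Fintype.card_fin] at fiber_mul
  have hq_pos : 0 < q := hq ▸ Fintype.card_pos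
  exact (Nat.div_eq_of_eq_mul_left (by positivity) fiber_mul.symm).symm

/-- For `z₁ ≠ 0`, the number of symmetric `n × n` matrices `H` over the field with `q`
elements satisfying `H ⬝ z₁ = z₂` equals `q ^ (n*(n+1)/2) / q ^ n`. -/
theorem stmt0 (q n : ℕ) (hn : 0 < n) (F : Type) [Field F] [Fintype F]
    (hq : Fintype.card F = q) (hq' : IsPrimePow q)
    (z₁ z₂ : Fin n → F) (hz₁ : z₁ ≠ 0) :
    Nat.card {H : Matrix (Fin n) (Fin n) F // H.IsSymm ∧ H.mulVec z₁ = z₂} =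
      q ^ (n * (n + 1) / 2) / q ^ n :=
  stmt0_general q n F hq z₁ z₂ hz₁
end

section
/- Let n ≥ 8 be a power of 2 and let q be a prime with q ≡ 5 (mod 8). Then the multiplicative order of q modulo 2n equals n/2; in particular, q is a primitive λ-root modulo 2n (since λ(2n) = n/2 for 2n a power of 2 at least 8), and consequently the polynomial X^n + 1 factors modulo q into exactly two distinct irreducible polynomials, each of degree n/2. -/
open Polynomial

/-! Writing `q = 1 + 4a` with `a` odd, the order of `q` modulo `2 ^ (e + 2)` is `2 ^ e`, which
is also, for `e ≥ 1`, the exponent of `(ZMod (2 ^ (e + 2)))ˣ` (the Carmichael function of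
`2 ^ (e + 2)`). As `q ≡ 1 (mod 4)`, `-1 = r ^ 2` in `ZMod q`, so
`X ^ n + 1 = (X ^ (n/2) - r) (X ^ (n/2) + r)`. Both factors divide the cyclotomic polynomial
`Φ_{2n} = X ^ n + 1` and their degree is the order of `q` modulo `2n`, which forces them to be
irreducible. -/

theorem ZMod.orderOf_natCast_two_pow_of_mod_eight_eq_five {q : ℕ} (hq : q % 8 = 5) (n : ℕ) :
    orderOf (q : ZMod (2 ^ (n + 2))) = 2 ^ n := by
  obtain ⟨a, rfl⟩ : ∃ a, q = 1 + 4 * (2 * a + 1) := ⟨q / 8, by omega⟩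
  convert ZMod.orderOf_one_add_four_mul (2 * a + 1) (odd_two_mul_add_one _) n using 2
  push_cast
  rfl

theorem Polynomial.cyclotomic_two_pow_succ (R : Type*) [CommRing R] (n : ℕ) :
    cyclotomic (2 ^ (n + 1)) R = X ^ 2 ^ n + 1 := by
  rw [cyclotomic_prime_pow_eq_geom_sum Nat.prime_two, Finset.sum_range_succ,
    Finset.sum_range_one, pow_zero, pow_one, add_comm]

theorem Polynomial.X_pow_mul_two_add_one_eq_mul {R : Type*} [CommRing R] {r : R}
    (hr : r ^ 2 = -1) (m : ℕ) :
    (X ^ (m * 2) + 1 : R[X]) = (X ^ m - C r) * (X ^ m - C (-r)) := by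
  have : (C r) ^ 2 = -1 := by rw [← C_pow, hr, C_neg, C_1]
  rw [C_neg, pow_mul]
  linear_combination this

theorem ZMod.exponent_units_two_pow (n : ℕ) :
    Monoid.exponent (ZMod (2 ^ (n + 3)))ˣ = 2 ^ (n + 1) := by
  rw [← ArithmeticFunction.carmichael_eq_exponent',
    ArithmeticFunction.carmichael_two_pow_of_ne_two (by omega)]
  rfl

theorem ZMod.irreducible_X_pow_sub_C_of_sq_eq_neg_one {p : ℕ} [hp : Fact p.Prime]
    (hp5 : p % 8 = 5) {r : ZMod p} (hr : r ^ 2 = -1) (k : ℕ) :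
    Irreducible (X ^ 2 ^ (k + 2) - C r : (ZMod p)[X]) := by
  have hp2 : ¬ p ∣ 2 ^ (k + 4) := fun h ↦ by
    have := Nat.le_of_dvd two_pos (hp.out.dvd_of_dvd_pow h)
    omega
  refine ZMod.irreducible_of_dvd_cyclotomic_of_natDegree hp2 ⟨X ^ 2 ^ (k + 2) - C (-r), ?_⟩ ?_
  · rw [cyclotomic_two_pow_succ, pow_succ 2 (k + 2), X_pow_mul_two_add_one_eq_mul hr]
  · rw [natDegree_X_pow_sub_C, ← orderOf_units, ZMod.coe_unitOfCoprime,
      ZMod.orderOf_natCast_two_pow_of_mod_eight_eq_five hp5]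

/-- For `n ≥ 8` a power of two and `q ≡ 5 (mod 8)` prime, the order of `q` modulo `2n` is
`n/2`; hence `q` is a primitive `λ`-root modulo `2n`, and `X^n + 1` factors modulo `q` into
exactly two distinct monic irreducible polynomials of degree `n/2`. -/
theorem stmt13 (n : ℕ) (hn8 : 8 ≤ n) (hn : ∃ e : ℕ, n = 2 ^ e) (q : ℕ) (hq : q.Prime)
    (hq5 : q % 8 = 5) :
    orderOf ((q : ZMod (2 * n))) = n / 2 ∧
    orderOf ((q : ZMod (2 * n))) = Monoid.exponent (ZMod (2 * n))ˣ ∧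
    ∃ p₁ p₂ : Polynomial (ZMod q), p₁ ≠ p₂ ∧
      p₁.Monic ∧ p₂.Monic ∧ Irreducible p₁ ∧ Irreducible p₂ ∧
      p₁.natDegree = n / 2 ∧ p₂.natDegree = n / 2 ∧
      (X ^ n + 1 : Polynomial (ZMod q)) = p₁ * p₂ := by
  obtain ⟨e, rfl⟩ := hn
  obtain ⟨k, rfl⟩ : ∃ k, e = k + 3 :=
    ⟨e - 3, by have : 3 ≤ e := (Nat.pow_le_pow_iff_right one_lt_two).mp hn8; omega⟩
  have hhalf : 2 ^ (k + 3) / 2 = 2 ^ (k + 2) := by rw [pow_succ, Nat.mul_div_cancel _ two_pos]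
  rw [← pow_succ', hhalf, ZMod.orderOf_natCast_two_pow_of_mod_eight_eq_five hq5,
    ZMod.exponent_units_two_pow]
  have := Fact.mk hq
  obtain ⟨r, hr⟩ := (ZMod.exists_sq_eq_neg_one_iff (p := q)).mpr (by omega)
  replace hr : r ^ 2 = -1 := by rw [sq, hr]
  have hr0 : r ≠ 0 := by rintro rfl; norm_num at hr
  have hm : 2 ^ (k + 2) ≠ 0 := by positivity
  refine ⟨rfl, rfl, X ^ 2 ^ (k + 2) - C r, X ^ 2 ^ (k + 2) - C (-r), ?_,
    monic_X_pow_sub_C _ hm, monic_X_pow_sub_C _ hm,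
    ZMod.irreducible_X_pow_sub_C_of_sq_eq_neg_one hq5 hr k,
    ZMod.irreducible_X_pow_sub_C_of_sq_eq_neg_one hq5 (by rwa [neg_sq]) k,
    natDegree_X_pow_sub_C, natDegree_X_pow_sub_C,
    by rw [pow_succ 2 (k + 2), X_pow_mul_two_add_one_eq_mul hr]⟩
  exact fun h ↦ ZMod.ne_neg_self (hq.odd_of_ne_two (by omega)) hr0
    (C_injective (sub_right_injective h))
end

section
/- Let n be a positive integer and let σ_n be the n×n matrix with σ_n = [[1, 0], [0, −Ī_{n−1}]] where Ī_{n−1} is the (n−1)×(n−1) anti-diagonal (reversal) matrix. For any h = (h₀,…,h_{n−1}) with multiplication matrix ρ(h) in ℤ[X]/(X^n+1) (the negacyclic circulant matrix of h), the matrix σ_n·ρ(h) is symmetric. -/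
/-!
Row `i > 0` of `σ_n` is `-e_{n-i}`, so row `i` of `σ_n · ρ(h)` is the coefficient vector of
`-X^{n-i} · h = X^{-i} · h` (as `X^n = -1`). Its `j`-th coefficient is the `(i + j)`-th
coefficient of `h` read negacyclically, `h_{i+j}` or `-h_{i+j-n}`, which depends only on `i + j`.
-/

/-- The negacyclic (multiplication) matrix of `h` in `ℤ[X]/(X^n+1)` with respect to the
basis `1, X, …, X^{n-1}`: row `i` is the coefficient vector of `X^i · h`. -/
def negacirc (n : ℕ) (h : Fin n → ℤ) : Matrix (Fin n) (Fin n) ℤ :=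
  Matrix.of fun i j =>
    if hij : (i : ℕ) ≤ (j : ℕ) then h ⟨(j : ℕ) - (i : ℕ), by have := j.isLt; omega⟩
    else -h ⟨n + (j : ℕ) - (i : ℕ), by have := i.isLt; have := j.isLt; omega⟩

/-- The matrix `σ_n = [[1, 0], [0, -Ī_{n-1}]]`, where `Ī_{n-1}` is the anti-diagonal
reversal matrix. -/
def sigmaMat (n : ℕ) : Matrix (Fin n) (Fin n) ℤ :=
  Matrix.of fun i j =>
    if (i : ℕ) = 0 ∧ (j : ℕ) = 0 then 1
    else if (i : ℕ) + (j : ℕ) = n then -1 else 0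

theorem sigmaMat_mul_apply {n : ℕ} (M : Matrix (Fin n) (Fin n) ℤ) (i j : Fin n) :
    (sigmaMat n * M) i j =
      if hi : (i : ℕ) = 0 then M i j else -M ⟨n - i, by omega⟩ j := by
  have := i.isLt
  split_ifs with hi
  · rw [Matrix.mul_apply, Fintype.sum_eq_single i fun k hk => ?_]
    · simp [sigmaMat, hi]
    · have : (k : ℕ) ≠ 0 := fun hk0 => hk (Fin.ext (hk0.trans hi.symm))
      simp [sigmaMat, hi, this, k.isLt.ne]
  · rw [Matrix.mul_apply, Fintype.sum_eq_single ⟨n - i, by omega⟩ fun k hk => ?_]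
    · simp [sigmaMat, hi]
    · have : (i : ℕ) + k ≠ n := fun hk' => hk (Fin.ext (by simp; omega))
      simp [sigmaMat, hi, this]

theorem sigmaMat_mul_negacirc_apply {n : ℕ} (h : Fin n → ℤ) (i j : Fin n) :
    (sigmaMat n * negacirc n h) i j =
      if hij : (i : ℕ) + j < n then h ⟨i + j, hij⟩ else -h ⟨i + j - n, by omega⟩ := by
  rw [sigmaMat_mul_apply]
  simp only [negacirc, Matrix.of_apply]
  split_ifs <;> (try simp only [neg_neg, neg_inj]) <;> first | omega | (congr 2; omega)

theorem stmt16_general (n : ℕ) (h : Fin n → ℤ) :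
    (sigmaMat n * negacirc n h).IsSymm := by
  ext i j
  rw [Matrix.transpose_apply, sigmaMat_mul_negacirc_apply, sigmaMat_mul_negacirc_apply]
  simp only [Nat.add_comm (j : ℕ)]

/-- The matrix `σ_n · ρ(h)` is symmetric. -/
theorem stmt16 (n : ℕ) (hn : 0 < n) (h : Fin n → ℤ) :
    (sigmaMat n * negacirc n h).IsSymm :=
  stmt16_general n h
end

section
/- Let H be a symmetric n×n integer matrix, q a prime, λ a positive integer, and let L = (1/√(λq))·L^⊥(H), where L^⊥(H) = {(z₁,z₂) ∈ ℤ^{2n} : H·z₁ ≡ z₂ mod q}. Given any target v ∈ ℝ^{2n} with dist(v, L) < 1/(2√(λq)), the following procedure outputs the (unique) closest lattice vector: set cᵢ = ⌊√(λq)·vᵢ⌉ for i = 1,…,n; set w = (v_{n+1},…,v_{2n})·√(λq) − (c₁,…,c_n)·H; set c_{n+i} = ⌊wᵢ/q⌉ for i = 1,…,n; output the lattice vector (c₁,…,c_{2n})·(1/√(λq))·M_H, where M_H = [[I_n, H],[0, q·I_n]]. -/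
/-! Write `c₀ = (a, b)`, so that `c₀ M_H = (a, aH + q b)`. The distance hypothesis bounds every
coordinate by the whole norm, so `|s vᵢ - (c₀ M_H)ᵢ| < 1/2` for all `i`, where `s = √(λq)`. On the
first half this says that `s vᵢ` rounds to `aᵢ`, hence `c₁ = a`; then `w = s v₂ - aH` lies within
`1/2` of `q b`, and dividing by `q ≥ 1` keeps it within `1/2`, hence `c₂ = b`. So the decoder
recovers the coefficient vector `c₀` of any lattice point within the radius, which in particular
makes that point unique. -/

open Matrix

section Round

variable {α : Type*} [Field α] [LinearOrder α] [IsStrictOrderedRing α] [FloorRing α]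

lemma round_eq_of_abs_sub_lt {x : α} {m : ℤ} (h : |x - m| < 1 / 2) : round x = m := by
  rw [round_eq_iff]
  rw [abs_sub_lt_iff] at h
  constructor <;> linarith

lemma round_div_eq_of_abs_sub_mul_lt {x q : α} {m : ℤ} (hq : 1 ≤ q) (h : |x - q * m| < 1 / 2) :
    round (x / q) = m := by
  have hq₀ : 0 < q := zero_lt_one.trans_le hq
  apply round_eq_of_abs_sub_lt
  calc |x / q - m| = |x - q * m| / q := by
        rw [← abs_of_pos hq₀, ← abs_div, abs_of_pos hq₀, sub_div,
          mul_div_cancel_left₀ _ hq₀.ne']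
    _ ≤ |x - q * m| := div_le_self (abs_nonneg _) hq
    _ < 1 / 2 := h

end Round

lemma abs_le_sqrt_sum_sq {ι : Type*} [Fintype ι] (x : ι → ℝ) (i : ι) :
    |x i| ≤ √(∑ j, x j ^ 2) :=
  Real.abs_le_sqrt (Finset.single_le_sum (fun j _ => sq_nonneg (x j)) (Finset.mem_univ i))

lemma abs_mul_sub_lt_half {s x y : ℝ} (hs : 0 < s) (h : |x - y / s| < 1 / (2 * s)) :
    |s * x - y| < 1 / 2 :=
  calc |s * x - y| = s * |x - y / s| := by
        rw [← abs_of_pos hs, ← abs_mul, abs_of_pos hs, mul_sub, mul_div_cancel₀ _ hs.ne']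
    _ < s * (1 / (2 * s)) := mul_lt_mul_of_pos_left h hs
    _ = 1 / 2 := by field_simp

lemma vecMul_fromBlocks_one_zero_smul_one {R m : Type*} [CommSemiring R] [Fintype m]
    [DecidableEq m] (H : Matrix m m R) (q : R) (c : m ⊕ m → R) :
    c ᵥ* fromBlocks 1 H 0 (q • 1) =
      Sum.elim (c ∘ Sum.inl) ((c ∘ Sum.inl) ᵥ* H + q • (c ∘ Sum.inr)) := by
  rw [vecMul_fromBlocks, vecMul_smul, vecMul_one]
  simp

theorem stmt18_general (n lam q : ℕ) (hlam : 0 < lam) (hq : q.Prime)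
    (H : Matrix (Fin n) (Fin n) ℤ) (v : Fin n ⊕ Fin n → ℝ) :
    let s : ℝ := Real.sqrt (lam * q)
    let M : Matrix (Fin n ⊕ Fin n) (Fin n ⊕ Fin n) ℤ :=
      Matrix.fromBlocks 1 H 0 ((q : ℤ) • 1)
    let c₁ : Fin n → ℤ := fun i => round (s * v (Sum.inl i))
    let w : Fin n → ℝ := fun i => s * v (Sum.inr i) - ((Matrix.vecMul c₁ H) i : ℝ)
    let c₂ : Fin n → ℤ := fun i => round (w i / q)
    let out : Fin n ⊕ Fin n → ℝ :=
      fun i => ((Matrix.vecMul (Sum.elim c₁ c₂) M) i : ℝ) / s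
    ∀ c₀ : Fin n ⊕ Fin n → ℤ,
      Real.sqrt (∑ i, (v i - ((Matrix.vecMul c₀ M) i : ℝ) / s) ^ 2) < 1 / (2 * s) →
      (fun i => ((Matrix.vecMul c₀ M) i : ℝ) / s) = out := by
  intro s M c₁ w c₂ out c₀ hdist
  have hs : 0 < s := by
    have := hq.pos
    positivity
  have hclose (i) : |s * v i - (c₀ ᵥ* M) i| < 1 / 2 :=
    abs_mul_sub_lt_half hs ((abs_le_sqrt_sum_sq _ i).trans_lt hdist)
  simp only [M, vecMul_fromBlocks_one_zero_smul_one] at hclose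
  have hc₁ : c₁ = c₀ ∘ Sum.inl := funext fun i =>
    round_eq_of_abs_sub_lt (by simpa using hclose (.inl i))
  have hc₂ : c₂ = c₀ ∘ Sum.inr := funext fun i => by
    refine round_div_eq_of_abs_sub_mul_lt (by exact_mod_cast hq.one_lt.le) ?_
    have hw : w i - q * c₀ (.inr i) =
        s * v (.inr i) - ((c₀ ∘ Sum.inl ᵥ* H) i + q * c₀ (.inr i)) := by
      simp only [w, hc₁]
      ring
    simpa [hw] using hclose (.inr i)
  have hc : Sum.elim c₁ c₂ = c₀ := by rw [hc₁, hc₂, Sum.elim_comp_inl_inr]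
  simp only [out, hc]

/-- Correctness of the trivial bounded-distance decoder for `L = (1/√(λq)) L^⊥(H)`:
if some lattice point lies within distance `1/(2√(λq))` of the target `v`, then the
rounding procedure outputs exactly that (necessarily unique) closest lattice point. -/
theorem stmt18 (n lam q : ℕ) (hn : 0 < n) (hlam : 0 < lam) (hq : q.Prime)
    (H : Matrix (Fin n) (Fin n) ℤ) (hH : H.IsSymm) (v : Fin n ⊕ Fin n → ℝ) :
    let s : ℝ := Real.sqrt (lam * q)
    let M : Matrix (Fin n ⊕ Fin n) (Fin n ⊕ Fin n) ℤ :=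
      Matrix.fromBlocks 1 H 0 ((q : ℤ) • 1)
    let c₁ : Fin n → ℤ := fun i => round (s * v (Sum.inl i))
    let w : Fin n → ℝ := fun i => s * v (Sum.inr i) - ((Matrix.vecMul c₁ H) i : ℝ)
    let c₂ : Fin n → ℤ := fun i => round (w i / q)
    let out : Fin n ⊕ Fin n → ℝ :=
      fun i => ((Matrix.vecMul (Sum.elim c₁ c₂) M) i : ℝ) / s
    ∀ c₀ : Fin n ⊕ Fin n → ℤ,
      Real.sqrt (∑ i, (v i - ((Matrix.vecMul c₀ M) i : ℝ) / s) ^ 2) < 1 / (2 * s) →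
      (fun i => ((Matrix.vecMul c₀ M) i : ℝ) / s) = out :=
  stmt18_general n lam q hlam hq H v
end
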